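/- (Comparison theorem) Let Y^{(1)} ≥ Y^{(2)} be F_N-measurable, and g^{(1)}_n ≥ g^{(2)}_n pointwise, with at least one of g^{(1)}, g^{(2)} satisfying the balance condition g_n(z_2) - g_n(z_1) ≥ min_{θ∈Θ} θ^T (z_2 - z_1) for all z_1, z_2. Then E^{(1)}_n(Y^{(1)}) ≥ E^{(2)}_n(Y^{(2)}) for all n = 0,...,N. -/

import Mathlib

/-!
Backward induction on `n`. Since `Y_n`, `Z_n` and `g_n` are `F_n`-measurable, the backward
equation can be read along every continuation of a path by a vertex `v_j` at time `n`, giving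
`Y¹_n - Y²_n = (Y¹ - Y²)_{n+1} + g¹(Z¹) - g²(Z²) - (Z¹ - Z²)ᵀ v_j`. Choose `j` minimising
`(Z¹ - Z²)ᵀ v_j`: a linear functional attains its minimum over `Θ` at a vertex, so the balance
condition together with `g¹ ≥ g²` makes the driver term dominate the last one.
-/

open scoped Classical BigOperators
open Matrix

noncomputable section

/-- Path space: `N` steps, each increment indexed by `Fin (d+1)` (the increment at
step `n` being `v_{ω n}`). -/
abbrev PathSp (N d : ℕ) := Fin N → Fin (d + 1)

/-- Two paths agree on the first `n` coordinates. -/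
def agreeOn {N d : ℕ} (n : ℕ) (ω ω' : PathSp N d) : Prop :=
  ∀ k : Fin N, (k : ℕ) < n → ω k = ω' k

/-- A function of the path is `F_n`-measurable: it depends only on the first `n`
coordinates. -/
def MeasUpTo {N d : ℕ} {α : Type*} (n : ℕ) (f : PathSp N d → α) : Prop :=
  ∀ ω ω', agreeOn n ω ω' → f ω = f ω'

/-- Sum of `P ω' * f ω'` over the `F_n`-cylinder of `ω`. -/
def cylSum {N d : ℕ} (P : PathSp N d → ℝ) (n : ℕ) (f : PathSp N d → ℝ)
    (ω : PathSp N d) : ℝ :=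
  ∑ ω' : PathSp N d, if agreeOn n ω ω' then P ω' * f ω' else 0

/-- Elementary conditional expectation of `f` given the first `n` coordinates,
under the probability mass function `P`. -/
def cExp {N d : ℕ} (P : PathSp N d → ℝ) (n : ℕ) (f : PathSp N d → ℝ)
    (ω : PathSp N d) : ℝ :=
  cylSum P n f ω / cylSum P n (fun _ => 1) ω

lemma exists_vertex_le_sInf_convexHull {ι κ : Type*} [Fintype ι] [Nonempty ι] [Fintype κ]
    (w : ι → κ → ℝ) (c : κ → ℝ) :
    ∃ j, ∑ k, w j k * c k ≤
      sInf {x : ℝ | ∃ θ ∈ convexHull ℝ (Set.range w), x = ∑ k, θ k * c k} := by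
  obtain ⟨j, -, hj⟩ := Finset.exists_min_image Finset.univ (fun i => ∑ k, w i k * c k)
    Finset.univ_nonempty
  have hlin : IsLinearMap ℝ (fun θ : κ → ℝ => ∑ k, θ k * c k) :=
    ⟨fun x y => by simp only [Pi.add_apply, add_mul, Finset.sum_add_distrib],
     fun a x => by simp only [Pi.smul_apply, smul_eq_mul, Finset.mul_sum, mul_assoc]⟩
  have hhull : convexHull ℝ (Set.range w) ⊆ {θ | ∑ k, w j k * c k ≤ ∑ k, θ k * c k} :=
    convexHull_min (Set.range_subset_iff.2 fun i => hj i (Finset.mem_univ _))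
      (convex_halfSpace_ge hlin _)
  refine ⟨j, le_csInf ⟨_, w j, subset_convexHull ℝ _ ⟨j, rfl⟩, rfl⟩ ?_⟩
  rintro x ⟨θ, hθ, rfl⟩
  exact hhull hθ

lemma sub_ge_of_le_of_balance {E : Type*} {f₁ f₂ : E → ℝ} {m : E → E → ℝ}
    (h₁₂ : ∀ z, f₂ z ≤ f₁ z)
    (hbal : (∀ z₁ z₂, f₁ z₂ - f₁ z₁ ≥ m z₁ z₂) ∨ (∀ z₁ z₂, f₂ z₂ - f₂ z₁ ≥ m z₁ z₂))
    (a b : E) : m b a ≤ f₁ a - f₂ b := by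
  rcases hbal with h | h
  · linarith [h b a, h₁₂ b]
  · linarith [h b a, h₁₂ a]

lemma agreeOn_update {N d : ℕ} (ω : PathSp N d) (n : Fin N) (j : Fin (d + 1)) :
    agreeOn n ω (Function.update ω n j) := fun _ hk =>
  (Function.update_of_ne (Fin.ne_of_lt hk) j ω).symm

lemma bsde_castSucc_eq {N d : ℕ} {w : Fin (d + 1) → Fin d → ℝ}
    {g : Fin N → PathSp N d → (Fin d → ℝ) → ℝ} {Y : Fin (N + 1) → PathSp N d → ℝ}
    {Z : Fin N → PathSp N d → Fin d → ℝ}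
    (hg : ∀ (n : Fin N) (z : Fin d → ℝ), MeasUpTo (n : ℕ) (fun ω => g n ω z))
    (hYad : ∀ n : Fin (N + 1), MeasUpTo (n : ℕ) (Y n))
    (hZpred : ∀ n : Fin N, MeasUpTo (n : ℕ) (Z n))
    (heq : ∀ (n : Fin N) (ω : PathSp N d),
      Y n.succ ω - Y n.castSucc ω = -(g n ω (Z n ω)) + ∑ k, Z n ω k * w (ω n) k)
    (n : Fin N) {ω ω' : PathSp N d} (h : agreeOn n ω ω') :
    Y n.castSucc ω = Y n.succ ω' + g n ω (Z n ω) - ∑ k, Z n ω k * w (ω' n) k := by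
  have hstep := heq n ω'
  rw [← hZpred n ω ω' h] at hstep
  have hg' : g n ω (Z n ω) = g n ω' (Z n ω) := hg n (Z n ω) ω ω' h
  have hY' : Y n.castSucc ω = Y n.castSucc ω' := hYad n.castSucc ω ω' h
  linarith

theorem stmt14_general (N d : ℕ)
    (w : Fin (d + 1) → (Fin d → ℝ))
    (g1 g2 : Fin N → PathSp N d → (Fin d → ℝ) → ℝ)
    (hg1 : ∀ (n : Fin N) (z : Fin d → ℝ), MeasUpTo (n : ℕ) (fun ω => g1 n ω z))
    (hg2 : ∀ (n : Fin N) (z : Fin d → ℝ), MeasUpTo (n : ℕ) (fun ω => g2 n ω z))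
    (hg12 : ∀ n ω z, g1 n ω z ≥ g2 n ω z)
    (hbal : (∀ (n : Fin N) (ω : PathSp N d) (z1 z2 : Fin d → ℝ),
        g1 n ω z2 - g1 n ω z1 ≥ sInf {x : ℝ | ∃ θ ∈ convexHull ℝ (Set.range w),
          x = ∑ k, θ k * (z2 k - z1 k)}) ∨
      (∀ (n : Fin N) (ω : PathSp N d) (z1 z2 : Fin d → ℝ),
        g2 n ω z2 - g2 n ω z1 ≥ sInf {x : ℝ | ∃ θ ∈ convexHull ℝ (Set.range w),
          x = ∑ k, θ k * (z2 k - z1 k)}))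
    (Y1term Y2term : PathSp N d → ℝ) (hY12 : ∀ ω, Y1term ω ≥ Y2term ω)
    (Y1 : Fin (N + 1) → PathSp N d → ℝ) (Z1 : Fin N → PathSp N d → (Fin d → ℝ))
    (hY1ad : ∀ n : Fin (N + 1), MeasUpTo (n : ℕ) (Y1 n))
    (hZ1pred : ∀ n : Fin N, MeasUpTo (n : ℕ) (Z1 n))
    (hterm1 : Y1 (Fin.last N) = Y1term)
    (heq1 : ∀ (n : Fin N) (ω : PathSp N d),
      Y1 n.succ ω - Y1 n.castSucc ω
        = -(g1 n ω (Z1 n ω)) + ∑ k, Z1 n ω k * w (ω n) k)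
    (Y2 : Fin (N + 1) → PathSp N d → ℝ) (Z2 : Fin N → PathSp N d → (Fin d → ℝ))
    (hY2ad : ∀ n : Fin (N + 1), MeasUpTo (n : ℕ) (Y2 n))
    (hZ2pred : ∀ n : Fin N, MeasUpTo (n : ℕ) (Z2 n))
    (hterm2 : Y2 (Fin.last N) = Y2term)
    (heq2 : ∀ (n : Fin N) (ω : PathSp N d),
      Y2 n.succ ω - Y2 n.castSucc ω
        = -(g2 n ω (Z2 n ω)) + ∑ k, Z2 n ω k * w (ω n) k) :
    ∀ (n : Fin (N + 1)) (ω : PathSp N d), Y1 n ω ≥ Y2 n ω := by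
  intro n
  induction n using Fin.reverseInduction with
  | last => intro ω; rw [hterm1, hterm2]; exact hY12 ω
  | cast n ih =>
    intro ω
    obtain ⟨j, hj⟩ := exists_vertex_le_sInf_convexHull w (fun k => Z1 n ω k - Z2 n ω k)
    have hdriver := sub_ge_of_le_of_balance (hg12 n ω)
      (hbal.imp (fun h => h n ω) (fun h => h n ω)) (Z1 n ω) (Z2 n ω)
    have hag := agreeOn_update ω n j
    have h1 := bsde_castSucc_eq hg1 hY1ad hZ1pred heq1 n hag
    have h2 := bsde_castSucc_eq hg2 hY2ad hZ2pred heq2 n hag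
    rw [Function.update_self] at h1 h2
    have hsum : ∑ k, Z1 n ω k * w j k - ∑ k, Z2 n ω k * w j k
        = ∑ k, w j k * (Z1 n ω k - Z2 n ω k) := by
      rw [← Finset.sum_sub_distrib]
      exact Finset.sum_congr rfl fun k _ => by ring
    linarith [ih (Function.update ω n j)]

/-- comparison theorem: if `Y⁽¹⁾ ≥ Y⁽²⁾`, `g⁽¹⁾ ≥ g⁽²⁾` and at least
one of the two drivers satisfies the balance condition
`g_n(z₂) - g_n(z₁) ≥ min_{θ∈Θ} θᵀ(z₂ - z₁)` with `Θ = conv{v_0,...,v_d}`,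
then the BSΔE solutions satisfy `Y⁽¹⁾_n ≥ Y⁽²⁾_n` for all `n`. -/
theorem stmt14 (N d : ℕ) (v : Fin d → (Fin d → ℝ)) (hv : LinearIndependent ℝ v)
    (hspan : Submodule.span ℝ (Set.range v) = ⊤)
    (w : Fin (d + 1) → (Fin d → ℝ))
    (hw0 : w 0 = -(∑ k, v k)) (hws : ∀ k : Fin d, w k.succ = v k)
    (g1 g2 : Fin N → PathSp N d → (Fin d → ℝ) → ℝ)
    (hg1 : ∀ (n : Fin N) (z : Fin d → ℝ), MeasUpTo (n : ℕ) (fun ω => g1 n ω z))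
    (hg2 : ∀ (n : Fin N) (z : Fin d → ℝ), MeasUpTo (n : ℕ) (fun ω => g2 n ω z))
    (hg12 : ∀ n ω z, g1 n ω z ≥ g2 n ω z)
    (hbal : (∀ (n : Fin N) (ω : PathSp N d) (z1 z2 : Fin d → ℝ),
        g1 n ω z2 - g1 n ω z1 ≥ sInf {x : ℝ | ∃ θ ∈ convexHull ℝ (Set.range w),
          x = ∑ k, θ k * (z2 k - z1 k)}) ∨
      (∀ (n : Fin N) (ω : PathSp N d) (z1 z2 : Fin d → ℝ),
        g2 n ω z2 - g2 n ω z1 ≥ sInf {x : ℝ | ∃ θ ∈ convexHull ℝ (Set.range w),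
          x = ∑ k, θ k * (z2 k - z1 k)}))
    (Y1term Y2term : PathSp N d → ℝ) (hY12 : ∀ ω, Y1term ω ≥ Y2term ω)
    (Y1 : Fin (N + 1) → PathSp N d → ℝ) (Z1 : Fin N → PathSp N d → (Fin d → ℝ))
    (hY1ad : ∀ n : Fin (N + 1), MeasUpTo (n : ℕ) (Y1 n))
    (hZ1pred : ∀ n : Fin N, MeasUpTo (n : ℕ) (Z1 n))
    (hterm1 : Y1 (Fin.last N) = Y1term)
    (heq1 : ∀ (n : Fin N) (ω : PathSp N d),
      Y1 n.succ ω - Y1 n.castSucc ω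
        = -(g1 n ω (Z1 n ω)) + ∑ k, Z1 n ω k * w (ω n) k)
    (Y2 : Fin (N + 1) → PathSp N d → ℝ) (Z2 : Fin N → PathSp N d → (Fin d → ℝ))
    (hY2ad : ∀ n : Fin (N + 1), MeasUpTo (n : ℕ) (Y2 n))
    (hZ2pred : ∀ n : Fin N, MeasUpTo (n : ℕ) (Z2 n))
    (hterm2 : Y2 (Fin.last N) = Y2term)
    (heq2 : ∀ (n : Fin N) (ω : PathSp N d),
      Y2 n.succ ω - Y2 n.castSucc ω
        = -(g2 n ω (Z2 n ω)) + ∑ k, Z2 n ω k * w (ω n) k) :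
    ∀ (n : Fin (N + 1)) (ω : PathSp N d), Y1 n ω ≥ Y2 n ω :=
  stmt14_general N d w g1 g2 hg1 hg2 hg12 hbal Y1term Y2term hY12 Y1 Z1 hY1ad hZ1pred hterm1 heq1 Y2
    Z2 hY2ad hZ2pred hterm2 heq2
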